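/- For every real number z with 0 < z < 1, the double polylogarithm Li_{(2,1)}(z) := ∑_{0<m<n} zⁿ/(m²·n) satisfies Li_{(2,1)}(z) = −(π²/6)·log(1−z) − 2·ζ(3) − Li₂(1−z)·log(1−z) + 2·Li₃(1−z). -/

import Mathlib

/-- The polylogarithm `Li_k(z) = ∑_{n=1}^∞ zⁿ/n^k` for `|z| < 1`. -/
noncomputable def Li (k : ℕ) (z : ℝ) : ℝ := ∑' n : ℕ, z ^ (n + 1) / ((n : ℝ) + 1) ^ k

/-- The double polylogarithm `Li_{(2,1)}(z) = ∑_{0<m<n} zⁿ/(m²·n)` for `|z| < 1`. -/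
noncomputable def Li21 (z : ℝ) : ℝ :=
  ∑' p : {q : ℕ+ × ℕ+ // q.1 < q.2},
    z ^ ((p.1.2 : ℕ)) / (((p.1.1 : ℕ) : ℝ) ^ 2 * ((p.1.2 : ℕ) : ℝ))

/-- `ζ(3) = ∑_{n=1}^∞ 1/n³`. -/
noncomputable def zeta3 : ℝ := ∑' n : ℕ, 1 / ((n : ℝ) + 1) ^ 3

open Real Filter Topology Set

/-!
Both sides tend to `0` as `z → 0⁺`, and both have derivative `Li₂(z)/(1 - z)` on `(0, 1)`:
for `Li_{(2,1)}` this is the Cauchy product of `Li₂(z)/z` with the geometric series, and for the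
right-hand side it follows from Euler's reflection formula
`Li₂(z) + Li₂(1 - z) + log z · log(1 - z) = π²/6`, which is proved by the same argument.
-/

theorem eqOn_Ioo_of_hasDerivAt_of_tendsto_nhdsGT {f g f' : ℝ → ℝ} {a b c : ℝ}
    (hf : ∀ x ∈ Ioo a b, HasDerivAt f (f' x) x) (hg : ∀ x ∈ Ioo a b, HasDerivAt g (f' x) x)
    (hfa : Tendsto f (𝓝[>] a) (𝓝 c)) (hga : Tendsto g (𝓝[>] a) (𝓝 c)) :
    EqOn f g (Ioo a b) := by
  rcases le_or_gt b a with hba | hab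
  · simp [Ioo_eq_empty_of_le hba]
  obtain ⟨d, hd⟩ := isOpen_Ioo.exists_eq_add_of_deriv_eq isPreconnected_Ioo
    (fun x hx => (hf x hx).differentiableAt.differentiableWithinAt)
    (fun x hx => (hg x hx).differentiableAt.differentiableWithinAt)
    (fun x hx => (hf x hx).deriv.trans (hg x hx).deriv.symm)
  have hfd : Tendsto f (𝓝[>] a) (𝓝 (c + d)) :=
    (hga.add_const d).congr' (eventuallyEq_of_mem (Ioo_mem_nhdsGT hab) fun x hx => (hd hx).symm)
  obtain rfl : d = 0 := by simpa using tendsto_nhds_unique hfa hfd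
  simpa using hd

theorem hasDerivAt_tsum_pow_div {ι : Type*} (e : ι → ℕ) (d : ι → ℝ)
    (he : ∀ i, e i ≠ 0)
    (hsum : ∀ r : ℝ, 0 ≤ r → r < 1 → Summable fun i => e i * r ^ (e i - 1) / |d i|)
    {x : ℝ} (hx : |x| < 1) :
    HasDerivAt (fun y => ∑' i, y ^ e i / d i) (∑' i, e i * x ^ (e i - 1) / d i) x := by
  obtain ⟨r, hxr, hr1⟩ := exists_between hx
  have hr0 : 0 < r := (abs_nonneg x).trans_lt hxr
  refine hasDerivAt_tsum_of_isPreconnected (t := Ioo (-r) r) (y₀ := 0)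
    (hsum r hr0.le hr1) isOpen_Ioo isPreconnected_Ioo
    (fun i y _ => (hasDerivAt_pow (e i) y).div_const (d i)) (fun i y hy => ?_)
    ⟨neg_neg_of_pos hr0, hr0⟩ (by simp [zero_pow (he _)]) (abs_lt.1 hxr)
  rw [norm_div, norm_mul, norm_pow, Real.norm_natCast, Real.norm_eq_abs, Real.norm_eq_abs]
  gcongr
  exact (abs_lt.2 hy).le

theorem tsum_pow_div_eq_Li_div (k : ℕ) {x : ℝ} (hx : x ≠ 0) :
    ∑' n : ℕ, x ^ n / ((n : ℝ) + 1) ^ k = Li k x / x := by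
  rw [eq_div_iff hx, Li, ← tsum_mul_right]
  congr 1 with n
  ring

theorem hasDerivAt_Li_succ (k : ℕ) {x : ℝ} (hx0 : x ≠ 0) (hx : |x| < 1) :
    HasDerivAt (Li (k + 1)) (Li k x / x) x := by
  have hterm (y : ℝ) (n : ℕ) :
      ((n + 1 : ℕ) : ℝ) * y ^ (n + 1 - 1) / ((n : ℝ) + 1) ^ (k + 1)
        = y ^ n / ((n : ℝ) + 1) ^ k := by
    push_cast
    field_simp
    ring
  have hsum (r : ℝ) (hr0 : 0 ≤ r) (hr1 : r < 1) :
      Summable fun n : ℕ =>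
        ((n + 1 : ℕ) : ℝ) * r ^ (n + 1 - 1) / |((n : ℝ) + 1) ^ (k + 1)| := by
    refine (summable_geometric_of_lt_one hr0 hr1).of_nonneg_of_le (fun n => by positivity)
      fun n => ?_
    rw [abs_of_pos (by positivity), hterm]
    exact div_le_self (by positivity) (one_le_pow₀ (by simp))
  have h := hasDerivAt_tsum_pow_div (fun n : ℕ => n + 1) (fun n => ((n : ℝ) + 1) ^ (k + 1))
    (fun n => n.succ_ne_zero) hsum hx
  simp only [hterm, tsum_pow_div_eq_Li_div k hx0] at h
  exact h

theorem Li_one {x : ℝ} (hx : |x| < 1) : Li 1 x = -log (1 - x) := by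
  simpa [Li] using (hasSum_pow_div_log_of_abs_lt_one hx).tsum_eq

theorem hasDerivAt_Li_succ_one_sub (k : ℕ) {x : ℝ} (hx : x ∈ Ioo (0 : ℝ) 1) :
    HasDerivAt (fun y => Li (k + 1) (1 - y)) (-(Li k (1 - x) / (1 - x))) x :=
  (hasDerivAt_Li_succ k (by linarith [hx.2])
    (abs_lt.2 ⟨by linarith [hx.2], by linarith [hx.1]⟩)).comp_const_sub 1 x

theorem continuousOn_Li {k : ℕ} (hk : 2 ≤ k) : ContinuousOn (Li k) (Icc (-1) 1) := by
  have hbound : Summable fun n : ℕ => 1 / ((n : ℝ) + 1) ^ 2 := by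
    exact_mod_cast (summable_nat_add_iff 1).2 (Real.summable_one_div_nat_pow.2 one_lt_two)
  refine continuousOn_tsum (fun n => (continuous_pow (n + 1)).div_const _ |>.continuousOn) hbound
    fun n x hx => ?_
  rw [norm_div, norm_pow, norm_pow, Real.norm_eq_abs, Real.norm_eq_abs,
    abs_of_pos (by positivity : (0 : ℝ) < n + 1)]
  gcongr
  · exact pow_le_one₀ (abs_nonneg x) (abs_le.2 hx)
  · simp

theorem tendsto_Li_one_sub {k : ℕ} (hk : 2 ≤ k) :
    Tendsto (fun x => Li k (1 - x)) (𝓝[>] 0) (𝓝 (Li k 1)) := by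
  have h1 : Tendsto (fun x : ℝ => 1 - x) (𝓝[>] 0) (𝓝[Icc (-1) 1] 1) := by
    refine tendsto_nhdsWithin_of_tendsto_nhds_of_eventually_within _ ?_ ?_
    · simpa using ((continuous_sub_left (1 : ℝ)).tendsto 0).mono_left nhdsWithin_le_nhds
    · filter_upwards [Ioo_mem_nhdsGT one_pos] with x hx
      exact ⟨by linarith [hx.2], by linarith [hx.1]⟩
  exact ((continuousOn_Li hk) 1 (by norm_num)).tendsto.comp h1

theorem Li_zero (k : ℕ) : Li k 0 = 0 := by
  simp [Li]

theorem tendsto_Li_nhdsGT_zero {k : ℕ} (hk : 2 ≤ k) : Tendsto (Li k) (𝓝[>] 0) (𝓝 0) := by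
  have h := ((continuousOn_Li hk).continuousAt (Icc_mem_nhds (by norm_num) one_pos)).tendsto
  simpa [Li_zero] using h.mono_left nhdsWithin_le_nhds

theorem Li_two_one : Li 2 1 = π ^ 2 / 6 := by
  have h := (hasSum_nat_add_iff' 1).2 hasSum_zeta_two
  simp only [Finset.range_one, Finset.sum_singleton, Nat.cast_zero] at h
  norm_num at h
  simpa [Li] using h.tsum_eq

theorem Li_three_one : Li 3 1 = zeta3 := by
  simp [Li, zeta3]

theorem hasDerivAt_log_one_sub {x : ℝ} (hx : x < 1) :
    HasDerivAt (fun y => log (1 - y)) (-(1 - x)⁻¹) x :=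
  (hasDerivAt_log (by linarith)).comp_const_sub 1 x

theorem tendsto_log_mul_log_one_sub :
    Tendsto (fun x => log x * log (1 - x)) (𝓝[>] 0) (𝓝 0) := by
  have hmul : Tendsto (fun x => x * log x) (𝓝[>] 0) (𝓝 0) := by
    simpa using (continuous_mul_log.tendsto 0).mono_left nhdsWithin_le_nhds
  have hslope : Tendsto (fun x => log (1 - x) / x) (𝓝[>] 0) (𝓝 (-1)) := by
    have h := (hasDerivAt_log_one_sub one_pos).tendsto_slope_zero_right
    simpa [div_eq_inv_mul] using h
  have h := hmul.mul hslope
  rw [zero_mul] at h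
  refine h.congr' (eventually_nhdsWithin_of_forall fun x (hx : 0 < x) => ?_)
  field_simp

theorem Li_two_add_Li_two_one_sub {x : ℝ} (hx : x ∈ Ioo (0 : ℝ) 1) :
    Li 2 x + Li 2 (1 - x) + log x * log (1 - x) = π ^ 2 / 6 := by
  refine eqOn_Ioo_of_hasDerivAt_of_tendsto_nhdsGT
    (f := fun y => Li 2 y + Li 2 (1 - y) + log y * log (1 - y)) (f' := fun _ => 0)
    (fun y hy => ?_)
    (fun y _ => hasDerivAt_const y _) ?_ tendsto_const_nhds hx
  · have hy0 : y ≠ 0 := hy.1.ne'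
    have hy1 : 1 - y ≠ 0 := by linarith [hy.2]
    have h := ((hasDerivAt_Li_succ 1 hy0 (abs_lt.2 ⟨by linarith [hy.1], hy.2⟩)).add
      (hasDerivAt_Li_succ_one_sub 1 hy)).add
      ((hasDerivAt_log hy0).mul (hasDerivAt_log_one_sub hy.2))
    refine h.congr_deriv ?_
    rw [Li_one (abs_lt.2 ⟨by linarith [hy.1], hy.2⟩),
      Li_one (abs_lt.2 ⟨by linarith [hy.2], by linarith [hy.1]⟩), sub_sub_cancel]
    field_simp
    ring
  · simpa [Li_two_one] using
      ((tendsto_Li_nhdsGT_zero le_rfl).add (tendsto_Li_one_sub le_rfl)).add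
        tendsto_log_mul_log_one_sub

def natProdEquivPNatLt : ℕ × ℕ ≃ {q : ℕ+ × ℕ+ // q.1 < q.2} where
  toFun ab := ⟨(ab.1.succPNat, (ab.1 + ab.2 + 1).succPNat), by
    simp [← PNat.coe_lt_coe]⟩
  invFun p := (p.1.1.natPred, p.1.2.natPred - p.1.1)
  left_inv ab := by simp
  right_inv p := by
    obtain ⟨⟨m, n⟩, h⟩ := p
    have hm := m.pos
    have hmn : (m : ℕ) < n := h
    ext <;> simp [← PNat.coe_inj, PNat.natPred] <;> omega

theorem summable_norm_pow_succ_div (k : ℕ) {x : ℝ} (hx : |x| < 1) :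
    Summable fun n : ℕ => ‖x ^ (n + 1) / ((n : ℝ) + 1) ^ k‖ := by
  refine (summable_geometric_of_lt_one (abs_nonneg x) hx).of_nonneg_of_le
    (fun n => norm_nonneg _) fun n => ?_
  rw [norm_div, norm_pow, norm_pow, Real.norm_eq_abs, Real.norm_eq_abs,
    abs_of_pos (by positivity : (0 : ℝ) < n + 1)]
  exact (div_le_self (by positivity) (one_le_pow₀ (by simp))).trans
    (pow_le_pow_of_le_one (abs_nonneg x) hx.le n.le_succ)

theorem hasSum_pow_pred_div_sq {x : ℝ} (hx : |x| < 1) :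
    HasSum (fun p : {q : ℕ+ × ℕ+ // q.1 < q.2} =>
        x ^ ((p.1.2 : ℕ) - 1) / ((p.1.1 : ℕ) : ℝ) ^ 2)
      (Li 2 x / (1 - x)) := by
  have hgeom : HasSum (fun n : ℕ => x ^ n) (1 - x)⁻¹ :=
    hasSum_geometric_of_abs_lt_one hx
  have hLi := summable_norm_pow_succ_div 2 hx
  have hgeom_norm : Summable fun n : ℕ => ‖x ^ n‖ := by
    simpa [norm_pow] using summable_geometric_of_lt_one (abs_nonneg x) hx
  have h := hLi.of_norm.hasSum.mul hgeom (summable_mul_of_summable_norm hLi hgeom_norm)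
  rw [← natProdEquivPNatLt.hasSum_iff, div_eq_mul_inv]
  refine h.congr_fun fun ⟨a, b⟩ => ?_
  simp only [Function.comp_apply, natProdEquivPNatLt, Equiv.coe_fn_mk, Nat.succPNat_coe]
  rw [show a + b + 1 + 1 - 1 = (a + 1) + b by omega, pow_add]
  push_cast
  ring

theorem hasDerivAt_Li21 {x : ℝ} (hx : |x| < 1) : HasDerivAt Li21 (Li 2 x / (1 - x)) x := by
  have hterm (y : ℝ) (p : {q : ℕ+ × ℕ+ // q.1 < q.2}) :
      ((p.1.2 : ℕ) : ℝ) * y ^ ((p.1.2 : ℕ) - 1)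
          / (((p.1.1 : ℕ) : ℝ) ^ 2 * ((p.1.2 : ℕ) : ℝ))
        = y ^ ((p.1.2 : ℕ) - 1) / ((p.1.1 : ℕ) : ℝ) ^ 2 := by
    field_simp
  have h := hasDerivAt_tsum_pow_div (fun p : {q : ℕ+ × ℕ+ // q.1 < q.2} => (p.1.2 : ℕ))
    (fun p => ((p.1.1 : ℕ) : ℝ) ^ 2 * ((p.1.2 : ℕ) : ℝ)) (fun p => p.1.2.ne_zero)
    (fun r hr0 hr1 => ?_) hx
  · simp only [hterm, (hasSum_pow_pred_div_sq hx).tsum_eq] at h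
    exact h
  · refine (hasSum_pow_pred_div_sq (x := r) (abs_lt.2 ⟨by linarith, hr1⟩)).summable.congr
      fun p => ?_
    rw [abs_of_pos (by positivity), hterm]

theorem tendsto_Li21_nhdsGT_zero : Tendsto Li21 (𝓝[>] 0) (𝓝 0) := by
  have h := (hasDerivAt_Li21 (x := 0) (by simp)).continuousAt.tendsto.mono_left
    (nhdsWithin_le_nhds (s := Ioi 0))
  simpa [Li21] using h

noncomputable def Li21ClosedForm (z : ℝ) : ℝ :=
  -(π ^ 2 / 6) * log (1 - z) - 2 * zeta3 - Li 2 (1 - z) * log (1 - z) + 2 * Li 3 (1 - z)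

theorem hasDerivAt_Li21ClosedForm {x : ℝ} (hx : x ∈ Ioo (0 : ℝ) 1) :
    HasDerivAt Li21ClosedForm (Li 2 x / (1 - x)) x := by
  have hlog := hasDerivAt_log_one_sub hx.2
  have h := ((((hlog.const_mul (-(π ^ 2 / 6))).sub_const (2 * zeta3)).sub
    ((hasDerivAt_Li_succ_one_sub 1 hx).mul hlog)).add
    ((hasDerivAt_Li_succ_one_sub 2 hx).const_mul 2))
  refine h.congr_deriv ?_
  have h1x : 1 - x ≠ 0 := by linarith [hx.2]
  have hLi2 : Li 2 x = π ^ 2 / 6 - Li 2 (1 - x) - log x * log (1 - x) := by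
    linarith [Li_two_add_Li_two_one_sub hx]
  rw [Li_one (abs_lt.2 ⟨by linarith [hx.2], by linarith [hx.1]⟩), sub_sub_cancel, hLi2,
    one_add_one_eq_two]
  field_simp
  ring

theorem tendsto_Li21ClosedForm_nhdsGT_zero : Tendsto Li21ClosedForm (𝓝[>] 0) (𝓝 0) := by
  have hlog : Tendsto (fun x => log (1 - x)) (𝓝[>] 0) (𝓝 0) := by
    simpa using (hasDerivAt_log_one_sub one_pos).continuousAt.tendsto.mono_left
      (nhdsWithin_le_nhds (s := Ioi 0))
  have h := (((hlog.const_mul (-(π ^ 2 / 6))).sub_const (2 * zeta3)).sub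
    ((tendsto_Li_one_sub le_rfl).mul hlog)).add
    ((tendsto_Li_one_sub (k := 3) (by norm_num)).const_mul 2)
  rwa [Li_three_one,
    show -(π ^ 2 / 6) * 0 - 2 * zeta3 - Li 2 1 * 0 + 2 * zeta3 = 0 by ring] at h

/-- Expression of `Li_{(2,1)}(z)` via classical polylogarithms at `1 − z`. -/
theorem Li21_eq (z : ℝ) (h0 : 0 < z) (h1 : z < 1) :
    Li21 z = -(Real.pi ^ 2 / 6) * Real.log (1 - z) - 2 * zeta3
      - Li 2 (1 - z) * Real.log (1 - z) + 2 * Li 3 (1 - z) :=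
  eqOn_Ioo_of_hasDerivAt_of_tendsto_nhdsGT
    (fun x hx => hasDerivAt_Li21 (abs_lt.2 ⟨by linarith [hx.1], hx.2⟩))
    (fun x hx => hasDerivAt_Li21ClosedForm hx)
    tendsto_Li21_nhdsGT_zero tendsto_Li21ClosedForm_nhdsGT_zero ⟨h0, h1⟩
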